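/- arXiv:chao-dyn/9703010 — 2 statements merged into one kernel-verified Lean document; each statement's English description precedes it below -/
import Mathlib

section
/- The parameter-dependent semiflow possesses τ₃-slow relaxations if and only if at least one of the following holds: (1) there exist a point (x*, k*) ∈ X × K, a sequence (xₙ, kₙ) → (x*, k*), a point y ∈ ω(x*, k*), and δ > 0 such that dist(y, ω(xₙ, kₙ)) ≥ δ for every n (ω(x,k)-bifurcations); (2) there exist x ∈ X and k ∈ K such that the (k,x)-motion is whole and x ∉ ω(x,k) (the motion is whole but not Poisson positively stable). -/
open Filter Topology Metric Set MeasureTheory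
open scoped ENNReal

/-- A parameter-dependent semiflow on a metric space `X` with parameter space `K`:
a map `f : [0,∞) × X × K → X` (encoded with time in `ℝ`, with conditions only for
nonnegative times), continuous on `[0,∞) × X × K`, satisfying the semigroup
identities, and injective in `x` for each fixed time and parameter. -/
structure PSemiflow (X K : Type*) [MetricSpace X] [MetricSpace K] where
  f : ℝ → X → K → X
  cont : ContinuousOn (fun p : ℝ × X × K => f p.1 p.2.1 p.2.2) {p : ℝ × X × K | 0 ≤ p.1}
  map_zero : ∀ x k, f 0 x k = x
  semigroup : ∀ t t' : ℝ, 0 ≤ t → 0 ≤ t' → ∀ x k, f t (f t' x k) k = f (t + t') x k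
  inj : ∀ t : ℝ, 0 ≤ t → ∀ k, Function.Injective fun x => f t x k

namespace PSemiflow

variable {X K : Type*} [MetricSpace X] [MetricSpace K] (S : PSemiflow X K)

/-- The ω-limit set `ω(x,k)`: all limits of `f(tₙ,x,k)` along sequences `tₙ → ∞`. -/
def omega (x : X) (k : K) : Set X :=
  {y | ∃ t : ℕ → ℝ, (∀ n, 0 ≤ t n) ∧ Tendsto t atTop atTop ∧
      Tendsto (fun n => S.f (t n) x k) atTop (𝓝 y)}

/-- The complete ω-limit set `ω(k) = ⋃ₓ ω(x,k)`. -/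
def omegaK (k : K) : Set X := ⋃ x : X, S.omega x k

/-- The relaxation time `τ₃(x,k,ε)`: time of the final entry of the motion into the
`ε`-neighbourhood of `ω(x,k)`. -/
noncomputable def tau3 (x : X) (k : K) (ε : ℝ) : ℝ :=
  sInf {t : ℝ | 0 ≤ t ∧ ∀ t' > t, infDist (S.f t' x k) (S.omega x k) < ε}

/-- The system possesses τ₃-slow relaxations. -/
def SlowTau3 : Prop := ∃ ε > (0:ℝ), ∀ T > (0:ℝ), ∃ x k, S.tau3 x k ε > T

/-- The (k,x)-motion is whole: it extends to a full trajectory `φ : ℝ → X`. -/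
def IsWholeMotion (x : X) (k : K) (φ : ℝ → X) : Prop :=
  φ 0 = x ∧ ∀ s t : ℝ, 0 ≤ t → S.f t (φ s) k = φ (s + t)

end PSemiflow

/-- The α-limit set of a whole motion `φ`: all limits of `φ(tₙ)` with `tₙ → -∞`. -/
def alphaLimit {X : Type*} [MetricSpace X] (φ : ℝ → X) : Set X :=
  {y | ∃ t : ℕ → ℝ, Tendsto t atTop atBot ∧ Tendsto (fun n => φ (t n)) atTop (𝓝 y)}

/-! If some point stays `ε`-far from its own ω-limit set at ever later times `tₙ`, compactness
yields a limit point `z` (at parameter `k`) of these late positions together with limits of the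
positions `m` time units earlier; the latter form a backward orbit of `z`, so the `(k,z)`-motion
is whole. Since `ω` is invariant along motions, the late positions are `ε`-far from their own
ω-limit sets, and without ω-bifurcations this passes to the limit: `z` is `ε`-far from
`ω(z,k)`. Conversely, a bifurcation or a whole motion that is not Poisson stable provides, for
every `T`, a point that is still far from its ω-limit set at some time `t > T`. -/

namespace PSemiflow

variable {X K : Type*} [MetricSpace X] [MetricSpace K] (S : PSemiflow X K)

def HasOmegaBifurcationAt (x : X) (k : K) : Prop :=
  ∃ (xs : ℕ → X) (ks : ℕ → K) (y : X) (δ : ℝ), 0 < δ ∧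
    Tendsto xs atTop (𝓝 x) ∧ Tendsto ks atTop (𝓝 k) ∧
    y ∈ S.omega x k ∧ ∀ n, δ ≤ infDist y (S.omega (xs n) (ks n))

lemma tendsto_f {α : Type*} {l : Filter α} {t : ℝ} (ht : 0 ≤ t) {u : α → X} {v : α → K}
    {x : X} {k : K} (hu : Tendsto u l (𝓝 x)) (hv : Tendsto v l (𝓝 k)) :
    Tendsto (fun a => S.f t (u a) (v a)) l (𝓝 (S.f t x k)) :=
  (S.cont (t, x, k) ht).tendsto.comp <| tendsto_nhdsWithin_of_tendsto_nhds_of_eventually_within _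
    (tendsto_const_nhds.prodMk_nhds (hu.prodMk_nhds hv)) (Eventually.of_forall fun _ => ht)

lemma omega_eq_setOf_mapClusterPt (x : X) (k : K) :
    S.omega x k = {y | MapClusterPt y atTop fun t => S.f t x k} := by
  ext y
  constructor
  · rintro ⟨t, -, ht, hy⟩
    exact (mapClusterPt_comp.1 hy.mapClusterPt).mono ht
  · intro hy
    obtain ⟨ψ, hψy, hψ⟩ := hy.exists_seq_tendsto
    refine ⟨fun n => max (ψ n) 0, fun n => le_max_right _ _,
      tendsto_atTop_mono (fun n => le_max_left _ _) hψ, hψy.congr' ?_⟩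
    filter_upwards [hψ.eventually_ge_atTop 0] with n hn
    simp only [Function.comp_apply, max_eq_left hn]

lemma isClosed_omega (x : X) (k : K) : IsClosed (S.omega x k) := by
  rw [omega_eq_setOf_mapClusterPt]
  exact isClosed_setOfPred_clusterPt

lemma omega_nonempty [CompactSpace X] (x : X) (k : K) : (S.omega x k).Nonempty := by
  rw [omega_eq_setOf_mapClusterPt]
  exact exists_clusterPt_of_compactSpace _

lemma omega_f (x : X) (k : K) {s : ℝ} (hs : 0 ≤ s) :
    S.omega (S.f s x k) k = S.omega x k := by
  have hshift : (fun t => S.f t (S.f s x k) k) =ᶠ[atTop] (fun t => S.f t x k) ∘ (· + s) := by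
    filter_upwards [eventually_ge_atTop 0] with t ht
    exact S.semigroup t s ht hs x k
  simp only [omega_eq_setOf_mapClusterPt, hshift.mapClusterPt_iff, mapClusterPt_comp,
    map_add_atTop_eq]

lemma eventually_infDist_omega_lt [CompactSpace X] (x : X) (k : K) {ε : ℝ} (hε : 0 < ε) :
    ∀ᶠ t in atTop, infDist (S.f t x k) (S.omega x k) < ε := by
  by_contra h
  set far := {t | ε ≤ infDist (S.f t x k) (S.omega x k)}
  have : NeBot (atTop ⊓ 𝓟 far) :=
    frequently_iff_neBot.1 (by simpa only [not_eventually, not_lt] using h)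
  obtain ⟨y, hy⟩ :=
    exists_clusterPt_of_compactSpace (map (fun t => S.f t x k) (atTop ⊓ 𝓟 far))
  have hyω : y ∈ S.omega x k := by
    rw [omega_eq_setOf_mapClusterPt]
    exact MapClusterPt.mono hy inf_le_left
  have hyfar : ε ≤ infDist y (S.omega x k) :=
    (isClosed_le continuous_const (continuous_infDist_pt _)).mem_of_mapClusterPt hy
      (mem_inf_of_right (mem_principal_self _))
  linarith [infDist_zero_of_mem hyω]

lemma le_tau3 [CompactSpace X] {x : X} {k : K} {ε t : ℝ} (hε : 0 < ε)
    (h : ε ≤ infDist (S.f t x k) (S.omega x k)) : t ≤ S.tau3 x k ε := by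
  obtain ⟨T, hT⟩ := eventually_atTop.1 (S.eventually_infDist_omega_lt x k hε)
  refine le_csInf
    ⟨max T 0, le_max_right _ _, fun t' ht' => hT t' ((le_max_left T 0).trans ht'.le)⟩ ?_
  rintro b ⟨-, hb⟩
  exact not_lt.1 fun hbt => (hb t hbt).not_ge h

lemma exists_lt_infDist_of_lt_tau3 {x : X} {k : K} {ε T : ℝ} (hT : 0 ≤ T)
    (h : T < S.tau3 x k ε) : ∃ t > T, ε ≤ infDist (S.f t x k) (S.omega x k) := by
  by_contra! hlt
  exact h.not_ge (csInf_le ⟨0, fun _ ht => ht.1⟩ ⟨hT, hlt⟩)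

lemma exists_isWholeMotion {w : ℕ → X} {k : K}
    (hw : ∀ m m' : ℕ, m ≤ m' → S.f (m' - m) (w m') k = w m) :
    ∃ φ, S.IsWholeMotion (w 0) k φ := by
  have hcompat : ∀ (s : ℝ) (m m' : ℕ), m ≤ m' → 0 ≤ s + m →
      S.f (s + m') (w m') k = S.f (s + m) (w m) k := by
    intro s m m' hm hs
    rw [← hw m m' hm, S.semigroup _ _ hs (sub_nonneg.2 (Nat.cast_le.2 hm))]
    ring_nf
  have hceil : ∀ s : ℝ, 0 ≤ s + ⌈-s⌉₊ := fun s => by linarith [Nat.le_ceil (-s)]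
  have hφ : ∀ (s : ℝ) (m : ℕ), 0 ≤ s + m →
      S.f (s + ⌈-s⌉₊) (w ⌈-s⌉₊) k = S.f (s + m) (w m) k := by
    intro s m hs
    rcases le_total m ⌈-s⌉₊ with h | h
    · exact hcompat s m _ h hs
    · exact (hcompat s _ m h (hceil s)).symm
  refine ⟨fun s => S.f (s + ⌈-s⌉₊) (w ⌈-s⌉₊) k, ?_, fun s t ht => ?_⟩
  · simp [S.map_zero]
  · dsimp only
    rw [S.semigroup _ _ ht (hceil s), hφ (s + t) ⌈-s⌉₊ (by linarith [hceil s])]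
    ring_nf

lemma exists_isWholeMotion_of_tendsto_subseq [CompactSpace X] [CompactSpace K]
    (a : ℕ → X) (v : ℕ → K) (ts : ℕ → ℝ) (hts : ∀ n : ℕ, (n : ℝ) ≤ ts n) :
    ∃ (z : X) (k : K) (σ : ℕ → ℕ),
      Tendsto (fun j => S.f (ts (σ j)) (a (σ j)) (v (σ j))) atTop (𝓝 z) ∧
      Tendsto (v ∘ σ) atTop (𝓝 k) ∧ ∃ φ, S.IsWholeMotion z k φ := by
  obtain ⟨⟨w, k⟩, σ, hσ, hlim⟩ :=
    SeqCompactSpace.tendsto_subseq fun n : ℕ => ((fun m : ℕ => S.f (ts n - m) (a n) (v n)), v n)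
  have hw : ∀ m : ℕ,
      Tendsto (fun j => S.f (ts (σ j) - m) (a (σ j)) (v (σ j))) atTop (𝓝 (w m)) :=
    tendsto_pi_nhds.1 (continuous_fst.tendsto _ |>.comp hlim)
  have hk : Tendsto (v ∘ σ) atTop (𝓝 k) := continuous_snd.tendsto _ |>.comp hlim
  refine ⟨w 0, k, σ, by simpa using hw 0, hk, S.exists_isWholeMotion fun m m' hm => ?_⟩
  refine tendsto_nhds_unique
    ((S.tendsto_f (sub_nonneg.2 (Nat.cast_le.2 hm)) (hw m') hk).congr' ?_) (hw m)
  filter_upwards [eventually_ge_atTop m'] with j hj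
  have hm' : (m' : ℝ) ≤ ts (σ j) := (Nat.cast_le.2 (hj.trans (hσ.id_le j))).trans (hts _)
  rw [Function.comp_apply, S.semigroup _ _ (sub_nonneg.2 (Nat.cast_le.2 hm)) (sub_nonneg.2 hm')]
  ring_nf

lemma le_infDist_omega_of_tendsto [CompactSpace X] {z : X} {k : K}
    (hno : ¬ S.HasOmegaBifurcationAt z k) {u : ℕ → X} {v : ℕ → K} {ε : ℝ}
    (hu : Tendsto u atTop (𝓝 z)) (hv : Tendsto v atTop (𝓝 k))
    (hfar : ∀ n, ε ≤ infDist (u n) (S.omega (u n) (v n))) :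
    ε ≤ infDist z (S.omega z k) := by
  refine (le_infDist (S.omega_nonempty z k)).2 fun y hy => le_of_forall_pos_le_add fun δ hδ => ?_
  have hclose : ∃ᶠ n in atTop, infDist y (S.omega (u n) (v n)) < δ := by
    refine frequently_atTop.2 fun N => ?_
    by_contra! h
    exact hno ⟨fun n => u (n + N), fun n => v (n + N), y, δ, hδ,
      (tendsto_add_atTop_iff_nat N).2 hu, (tendsto_add_atTop_iff_nat N).2 hv, hy,
      fun n => h _ (Nat.le_add_left N n)⟩
  have hdist : ∃ᶠ n in atTop, dist (u n) y ∈ Ici (ε - δ) :=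
    hclose.mono fun n hn => mem_Ici.2 <| by
      linarith [hfar n,
        infDist_le_infDist_add_dist (x := u n) (y := y) (s := S.omega (u n) (v n))]
  linarith [mem_Ici.1 <|
    isClosed_Ici.mem_of_frequently_of_tendsto hdist (hu.dist tendsto_const_nhds)]

lemma exists_isWholeMotion_notMem_omega [CompactSpace X] [CompactSpace K] (hslow : S.SlowTau3)
    (hno : ∀ x k, ¬ S.HasOmegaBifurcationAt x k) :
    ∃ x k φ, S.IsWholeMotion x k φ ∧ x ∉ S.omega x k := by
  obtain ⟨ε, hε, hslow⟩ := hslow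
  have hbad : ∀ n : ℕ, ∃ x k t,
      (n : ℝ) < t ∧ ε ≤ infDist (S.f t x k) (S.omega x k) := by
    intro n
    obtain ⟨x, k, hxk⟩ := hslow (n + 1) (by positivity)
    obtain ⟨t, ht, hfar⟩ := S.exists_lt_infDist_of_lt_tau3 (Nat.cast_nonneg n) (by linarith)
    exact ⟨x, k, t, ht, hfar⟩
  choose a v ts hts hfar using hbad
  obtain ⟨z, k, σ, hz, hk, φ, hφ⟩ :=
    S.exists_isWholeMotion_of_tendsto_subseq a v ts fun n => (hts n).le
  refine ⟨z, k, φ, hφ, fun hzω => ?_⟩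
  have hz_far := S.le_infDist_omega_of_tendsto (hno z k) hz hk fun j => by
    rw [Function.comp_apply, S.omega_f _ _ ((Nat.cast_nonneg _).trans (hts _).le)]
    exact hfar (σ j)
  linarith [infDist_zero_of_mem hzω]

lemma slowTau3_of_hasOmegaBifurcationAt [CompactSpace X] {x : X} {k : K}
    (h : S.HasOmegaBifurcationAt x k) : S.SlowTau3 := by
  obtain ⟨xs, ks, y, δ, hδ, hxs, hks, ⟨t, ht0, htop, hy⟩, hfar⟩ := h
  refine ⟨δ / 3, by positivity, fun T _ => ?_⟩
  obtain ⟨j, hjT, hj⟩ :=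
    ((htop.eventually_gt_atTop T).and (Metric.tendsto_nhds.1 hy (δ / 3) (by positivity))).exists
  obtain ⟨n, hn⟩ :=
    (Metric.tendsto_nhds.1 (S.tendsto_f (ht0 j) hxs hks) (δ / 3) (by positivity)).exists
  refine ⟨xs n, ks n, hjT.trans_le (S.le_tau3 (by positivity) ?_)⟩
  -- `f (t j) (xs n) (ks n)` lies within `2δ/3` of `y`, which is `δ`-far from `ω(xs n, ks n)`.
  linarith [hfar n, dist_comm y (S.f (t j) x k),
    dist_triangle_right y (S.f (t j) (xs n) (ks n)) (S.f (t j) x k),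
    infDist_le_infDist_add_dist (s := S.omega (xs n) (ks n)) (x := y)
      (y := S.f (t j) (xs n) (ks n))]

lemma slowTau3_of_isWholeMotion [CompactSpace X] {x : X} {k : K} {φ : ℝ → X}
    (hφ : S.IsWholeMotion x k φ) (hx : x ∉ S.omega x k) : S.SlowTau3 := by
  have hpos : 0 < infDist x (S.omega x k) :=
    ((S.isClosed_omega x k).notMem_iff_infDist_pos (S.omega_nonempty x k)).1 hx
  refine ⟨_, hpos, fun T hT => ⟨φ (-(T + 1)), k, ?_⟩⟩
  have hreach : S.f (T + 1) (φ (-(T + 1))) k = x := by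
    rw [hφ.2 _ _ (by positivity), neg_add_cancel, hφ.1]
  refine (lt_add_one T).trans_le (S.le_tau3 hpos ?_)
  rw [← S.omega_f (φ (-(T + 1))) k (by positivity : (0 : ℝ) ≤ T + 1), hreach]

end PSemiflow

/-- Theorem 2.7: the system possesses τ₃-slow relaxations iff (1) there are
`ω(x,k)`-bifurcations, or (2) there is a whole `(k,x)`-motion which is not Poisson
positively stable (`x ∉ ω(x,k)`). -/
theorem slowTau3_iff {X K : Type*} [MetricSpace X] [CompactSpace X]
    [MetricSpace K] [CompactSpace K] (S : PSemiflow X K) :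
    S.SlowTau3 ↔
      ((∃ (xstar : X) (kstar : K) (xs : ℕ → X) (ks : ℕ → K) (y : X) (δ : ℝ), 0 < δ ∧
          Tendsto xs atTop (𝓝 xstar) ∧ Tendsto ks atTop (𝓝 kstar) ∧
          y ∈ S.omega xstar kstar ∧ ∀ n, δ ≤ infDist y (S.omega (xs n) (ks n))) ∨
        (∃ (x : X) (k : K) (φ : ℝ → X), S.IsWholeMotion x k φ ∧ x ∉ S.omega x k)) := by
  show S.SlowTau3 ↔ (∃ x k, S.HasOmegaBifurcationAt x k) ∨ _
  refine ⟨fun hslow => or_iff_not_imp_left.2 fun hno =>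
    S.exists_isWholeMotion_notMem_omega hslow fun x k hb => hno ⟨x, k, hb⟩, ?_⟩
  rintro (⟨x, k, hb⟩ | ⟨x, k, φ, hφ, hx⟩)
  · exact S.slowTau3_of_hasOmegaBifurcationAt hb
  · exact S.slowTau3_of_isWholeMotion hφ hx
end

section
/- Let f be a semiflow on a compact connected metric space X such that the closure of ω_f is a disconnected set. Then the closure of ω_f is not Lyapunov stable. -/
open Filter Topology Metric Set MeasureTheory
open scoped ENNReal

/-- A semiflow on a metric space `X`: a map `f : [0,∞) × X → X` (encoded with time
in `ℝ`, with conditions only for nonnegative times), continuous on `[0,∞) × X`,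
satisfying the semigroup identities, and injective for each fixed time. -/
structure Semiflow (X : Type*) [MetricSpace X] where
  f : ℝ → X → X
  cont : ContinuousOn (fun p : ℝ × X => f p.1 p.2) {p : ℝ × X | 0 ≤ p.1}
  map_zero : ∀ x, f 0 x = x
  semigroup : ∀ t t' : ℝ, 0 ≤ t → 0 ≤ t' → ∀ x, f t (f t' x) = f (t + t') x
  inj : ∀ t : ℝ, 0 ≤ t → Function.Injective fun x => f t x

namespace Semiflow

variable {X : Type*} [MetricSpace X] (S : Semiflow X)

/-- The ω-limit set `ω(x)`: all limits of `f(tₙ,x)` along sequences `tₙ → ∞`. -/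
def omega (x : X) : Set X :=
  {y | ∃ t : ℕ → ℝ, (∀ n, 0 ≤ t n) ∧ Tendsto t atTop atTop ∧
      Tendsto (fun n => S.f (t n) x) atTop (𝓝 y)}

/-- The complete ω-limit set `ω_f = ⋃ₓ ω(x)`. -/
def omegaF : Set X := ⋃ x : X, S.omega x

/-- `W` is an invariant set: each of its points lies on a whole trajectory
contained in `W`. -/
def IsInvariantSet (W : Set X) : Prop :=
  ∀ x ∈ W, ∃ φ : ℝ → X, φ 0 = x ∧ (∀ s t : ℝ, 0 ≤ t → S.f t (φ s) = φ (s + t)) ∧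
    range φ ⊆ W

/-- `W` is Lyapunov stable. -/
def LyapunovStable (W : Set X) : Prop :=
  ∀ ε > (0:ℝ), ∃ δ > (0:ℝ), ∀ x : X, infDist x W < δ →
    ∀ t : ℝ, 0 ≤ t → infDist (S.f t x) W < ε

end Semiflow

/-!
Split `closure ω_f = A ∪ B` into disjoint nonempty closed pieces; by compactness their
`ε`-thickenings are disjoint for some `ε > 0`. Stability gives `δ ≤ ε` such that orbits starting
`δ`-close to `A ∪ B` stay `ε`-close to it. A forward orbit is connected, so once it comes
`δ`-close to `A` it stays `ε`-close to `A` and never comes `δ`-close to `B`. Every orbit comes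
`δ`-close to its nonempty ω-limit set, so the points whose orbit comes `δ`-close to `A`, resp.
`B`, form two disjoint nonempty open sets covering `X`, contradicting connectedness.
-/

theorem IsClosed.exists_union_eq_of_not_isPreconnected {α : Type*} [TopologicalSpace α]
    {s : Set α} (hs : IsClosed s) (h : ¬IsPreconnected s) :
    ∃ a b : Set α, IsClosed a ∧ IsClosed b ∧ Disjoint a b ∧ a.Nonempty ∧ b.Nonempty ∧
      a ∪ b = s := by
  simp only [isPreconnected_closed_iff, not_forall, not_nonempty_iff_eq_empty] at h
  obtain ⟨t, t', ht, ht', hcover, hst, hst', hdisj⟩ := h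
  refine ⟨s ∩ t, s ∩ t', hs.inter ht, hs.inter ht', ?_, hst, hst', ?_⟩
  · rwa [disjoint_iff_inter_eq_empty, ← inter_inter_distrib_left]
  · rw [← inter_union_distrib_left, inter_eq_left.2 hcover]

namespace Semiflow

variable {X : Type*} [MetricSpace X] (S : Semiflow X)

theorem continuous_f {t : ℝ} (ht : 0 ≤ t) : Continuous (S.f t) :=
  S.cont.comp_continuous (continuous_const.prodMk continuous_id) fun _ => ht

theorem continuousOn_orbit (x : X) : ContinuousOn (fun t => S.f t x) (Ici 0) :=
  S.cont.comp (continuous_id.prodMk continuous_const).continuousOn fun _ ht => ht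

theorem omega_nonempty [CompactSpace X] (x : X) : (S.omega x).Nonempty := by
  obtain ⟨y, φ, hφ, hy⟩ := CompactSpace.tendsto_subseq fun n : ℕ => S.f n x
  exact ⟨y, fun n => φ n, fun n => Nat.cast_nonneg _,
    tendsto_natCast_atTop_atTop.comp hφ.tendsto_atTop, hy⟩

theorem exists_dist_lt_of_mem_omega {x y : X} (hy : y ∈ S.omega x) {δ : ℝ} (hδ : 0 < δ) :
    ∃ t, 0 ≤ t ∧ dist (S.f t x) y < δ := by
  obtain ⟨t, ht, -, hty⟩ := hy
  obtain ⟨n, hn⟩ := (Metric.tendsto_atTop.1 hty) δ hδ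
  exact ⟨t n, ht n, hn n le_rfl⟩

def hittingSet (U : Set X) : Set X := ⋃ t ∈ Ici (0 : ℝ), S.f t ⁻¹' U

theorem mem_hittingSet {U : Set X} {x : X} :
    x ∈ S.hittingSet U ↔ ∃ t, 0 ≤ t ∧ S.f t x ∈ U := by
  simp [hittingSet]

theorem isOpen_hittingSet {U : Set X} (hU : IsOpen U) : IsOpen (S.hittingSet U) :=
  isOpen_biUnion fun _ ht => hU.preimage (S.continuous_f ht)

theorem subset_hittingSet (U : Set X) : U ⊆ S.hittingSet U := fun x hx =>
  S.mem_hittingSet.2 ⟨0, le_rfl, by rwa [S.map_zero]⟩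

theorem hittingSet_union (U V : Set X) :
    S.hittingSet (U ∪ V) = S.hittingSet U ∪ S.hittingSet V := by
  simp only [hittingSet, preimage_union, iUnion_union_distrib]

theorem hittingSet_thickening_eq_univ [CompactSpace X] {W : Set X} (hW : S.omegaF ⊆ W)
    {δ : ℝ} (hδ : 0 < δ) : S.hittingSet (thickening δ W) = univ := by
  refine eq_univ_of_forall fun x => ?_
  obtain ⟨y, hy⟩ := S.omega_nonempty x
  obtain ⟨t, ht, hxy⟩ := S.exists_dist_lt_of_mem_omega hy hδ
  exact S.mem_hittingSet.2 ⟨t, ht, mem_thickening_iff.2 ⟨y, hW (mem_iUnion.2 ⟨x, hy⟩), hxy⟩⟩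

variable {S} in
theorem LyapunovStable.exists_thickening {W : Set X} (hW : W.Nonempty) (h : S.LyapunovStable W)
    {ε : ℝ} (hε : 0 < ε) : ∃ δ, 0 < δ ∧ δ ≤ ε ∧
      ∀ y ∈ thickening δ W, ∀ t, 0 ≤ t → S.f t y ∈ thickening ε W := by
  obtain ⟨δ, hδ, hstab⟩ := h ε hε
  refine ⟨min δ ε, lt_min hδ hε, min_le_right _ _, fun y hy t ht => ?_⟩
  rw [mem_thickening_iff_infDist_lt hW] at hy ⊢
  exact hstab y (hy.trans_le (min_le_left _ _)) t ht

theorem mapsTo_thickening_of_stable {A B : Set X} {δ ε : ℝ} (hδε : δ ≤ ε)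
    (hstab : ∀ y ∈ thickening δ (A ∪ B), ∀ t, 0 ≤ t → S.f t y ∈ thickening ε (A ∪ B))
    (hAB : Disjoint (thickening ε A) (thickening ε B))
    {x : X} {t₀ : ℝ} (ht₀ : 0 ≤ t₀) (hx : S.f t₀ x ∈ thickening δ A) :
    MapsTo (fun t => S.f t x) (Ici t₀) (thickening ε A) := by
  have hcover : MapsTo (fun t => S.f t x) (Ici t₀) (thickening ε A ∪ thickening ε B) := by
    intro t ht
    have h := hstab _ (thickening_subset_of_subset δ subset_union_left hx) (t - t₀)
      (sub_nonneg.2 ht)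
    rwa [S.semigroup _ _ (sub_nonneg.2 ht) ht₀, sub_add_cancel, thickening_union] at h
  have horbit : IsPreconnected ((fun t => S.f t x) '' Ici t₀) :=
    isPreconnected_Ici.image _ ((S.continuousOn_orbit x).mono fun _ ht => ht₀.trans ht)
  have himage : (fun t => S.f t x) '' Ici t₀ ⊆ thickening ε A :=
    horbit.subset_left_of_subset_union isOpen_thickening isOpen_thickening hAB
      hcover.image_subset ⟨_, mem_image_of_mem _ self_mem_Ici, thickening_mono hδε _ hx⟩
  exact mapsTo_iff_image_subset.2 himage

theorem disjoint_hittingSet_of_stable {A B : Set X} {δ ε : ℝ} (hδε : δ ≤ ε)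
    (hstab : ∀ y ∈ thickening δ (A ∪ B), ∀ t, 0 ≤ t → S.f t y ∈ thickening ε (A ∪ B))
    (hAB : Disjoint (thickening ε A) (thickening ε B)) :
    Disjoint (S.hittingSet (thickening δ A)) (S.hittingSet (thickening δ B)) := by
  refine disjoint_left.2 fun x hxA hxB => ?_
  obtain ⟨s, hs, hsA⟩ := S.mem_hittingSet.1 hxA
  obtain ⟨t, ht, htB⟩ := S.mem_hittingSet.1 hxB
  rcases le_total s t with hst | hts
  · exact hAB.ne_of_mem (S.mapsTo_thickening_of_stable hδε hstab hAB hs hsA hst)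
      (thickening_mono hδε _ htB) rfl
  · exact hAB.ne_of_mem (thickening_mono hδε _ hsA)
      (S.mapsTo_thickening_of_stable hδε (union_comm A B ▸ hstab) hAB.symm ht htB hts) rfl

end Semiflow

/-- Lemma 3.3: if `X` is connected and the closure of `ω_f` is disconnected, then
the closure of `ω_f` is not Lyapunov stable. -/
theorem disconnected_closure_omegaF_not_stable {X : Type*} [MetricSpace X]
    [CompactSpace X] [ConnectedSpace X] (S : Semiflow X)
    (h : ¬ IsPreconnected (closure S.omegaF)) :
    ¬ S.LyapunovStable (closure S.omegaF) := by
  intro hstab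
  obtain ⟨A, B, hA, hB, hAB, hAne, hBne, hW⟩ :=
    isClosed_closure.exists_union_eq_of_not_isPreconnected h
  obtain ⟨ε, hε, hABε⟩ := hAB.exists_thickenings hA.isCompact hB
  rw [← hW] at hstab
  obtain ⟨δ, hδ, hδε, hstabδ⟩ := hstab.exists_thickening hAne.inl hε
  have hcover : S.hittingSet (thickening δ A) ∪ S.hittingSet (thickening δ B) = univ := by
    rw [← S.hittingSet_union, ← thickening_union, hW]
    exact S.hittingSet_thickening_eq_univ subset_closure hδ
  obtain ⟨x, hx⟩ := nonempty_inter (S.isOpen_hittingSet isOpen_thickening)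
    (S.isOpen_hittingSet isOpen_thickening) hcover
    ((hAne.mono (self_subset_thickening hδ A)).mono (S.subset_hittingSet _))
    ((hBne.mono (self_subset_thickening hδ B)).mono (S.subset_hittingSet _))
  exact (S.disjoint_hittingSet_of_stable hδε hstabδ hABε).ne_of_mem hx.1 hx.2 rfl
end
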